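/- arXiv:1706.03184 — 4 statements merged into one kernel-verified Lean document; each statement's English description precedes it below -/
import Mathlib

section
/- Let T be a binary computation tree of the form node(Tl, Tr), and let n ≥ 1 be an integer. Then Φ(T, n) = 1 + max( Φ(Tl, n−1) + Φ(Tr, n), Φ(Tr, n−1) + Φ(Tl, n) ). -/
/-- A binary computation tree: a single node, or a root with two subtrees. -/
inductive BTree : Type
  | triv : BTree
  | node : BTree → BTree → BTree
  deriving DecidableEq

/-- A steal step on a multiset of binary computation trees: choose an arbitrary
tree `U` and a tree `node l r` from the multiset, and replace them by `l` and `r`. -/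
def StealStep (S S' : Multiset BTree) : Prop :=
  ∃ (U l r : BTree) (S₀ : Multiset BTree),
    S = U ::ₘ BTree.node l r ::ₘ S₀ ∧ S' = l ::ₘ r ::ₘ S₀

/-- `StealSeq n S` means there exists a sequence of `n` steal steps starting from `S`. -/
def StealSeq : ℕ → Multiset BTree → Prop
  | 0, _ => True
  | n + 1, S => ∃ S', StealStep S S' ∧ StealSeq n S'

/-- The maximum length of a sequence of steal steps starting from `S`. -/
noncomputable def steals (S : Multiset BTree) : ℕ :=
  sSup {n | StealSeq n S}

/-- The `n`-th potential of `T`: the maximum number of steals starting from a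
configuration with one processor owning `T` and `n` processors with trivial trees. -/
noncomputable def Phi (T : BTree) (n : ℕ) : ℕ :=
  steals (T ::ₘ Multiset.replicate n BTree.triv)

/-! Write `maxSeqPhi S m` for the best value of running the trees of `S` one after another,
each with the help of the `m` idle processors and of the processors freed by the trees already
finished. The heart of the proof is `steals (S + replicate m triv) = maxSeqPhi S m`.
Sequential schedules are realisable, because idle processors are never better than busy ones,
so a run of one tree can be followed by a run of the others. Conversely, after a first steal
that splits `node l r`, an exchange argument shows that the best schedule of `l`, `r` and the
remaining trees is worth less than the best schedule of `node l r` and the remaining trees with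
one more idle processor; induction on the number of steals concludes. The recurrence is the
case of a single tree, whose first steal must split its root. -/

open BTree Multiset

namespace BTree

def numInternal : BTree → ℕ
  | triv => 0
  | node l r => numInternal l + numInternal r + 1

end BTree

def totalInternal (S : Multiset BTree) : ℕ := (S.map numInternal).sum

namespace StealStep

variable {S S' : Multiset BTree}

theorem card_eq (h : StealStep S S') : card S' = card S := by
  obtain ⟨U, l, r, S₀, rfl, rfl⟩ := h
  simp

theorem add_right (h : StealStep S S') (X : Multiset BTree) : StealStep (S + X) (S' + X) := by
  obtain ⟨U, l, r, S₀, rfl, rfl⟩ := h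
  exact ⟨U, l, r, S₀ + X, by simp only [cons_add], by simp only [cons_add]⟩

theorem totalInternal_lt (h : StealStep S S') : totalInternal S' < totalInternal S := by
  obtain ⟨U, l, r, S₀, rfl, rfl⟩ := h
  simp only [totalInternal, map_cons, sum_cons, numInternal]
  omega

end StealStep

theorem StealSeq.le_totalInternal {n : ℕ} {S : Multiset BTree} (h : StealSeq n S) :
    n ≤ totalInternal S := by
  induction n generalizing S with
  | zero => exact Nat.zero_le _
  | succ n ih =>
    obtain ⟨S', hstep, hseq⟩ := h
    have := hstep.totalInternal_lt
    have := ih hseq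
    omega

theorem bddAbove_stealSeq (S : Multiset BTree) : BddAbove {n | StealSeq n S} :=
  ⟨totalInternal S, fun _ => StealSeq.le_totalInternal⟩

theorem stealSeq_steals (S : Multiset BTree) : StealSeq (steals S) S :=
  Nat.sSup_mem (s := {n | StealSeq n S}) ⟨0, trivial⟩ (bddAbove_stealSeq S)

theorem le_steals {n : ℕ} {S : Multiset BTree} (h : StealSeq n S) : n ≤ steals S :=
  le_csSup (bddAbove_stealSeq S) h

theorem StealStep.steals_lt {S S' : Multiset BTree} (h : StealStep S S') :
    steals S' < steals S :=
  le_steals (n := steals S' + 1) ⟨S', h, stealSeq_steals S'⟩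

theorem exists_stealStep_steals_eq {S : Multiset BTree} (h : 0 < steals S) :
    ∃ S', StealStep S S' ∧ steals S = steals S' + 1 := by
  obtain ⟨k, hk⟩ := Nat.exists_eq_add_one_of_ne_zero h.ne'
  have hseq := stealSeq_steals S
  rw [hk] at hseq
  obtain ⟨S', hstep, hseq'⟩ := hseq
  have := le_steals hseq'
  have := hstep.steals_lt
  exact ⟨S', hstep, by omega⟩

theorem steals_cons_triv_le (T : BTree) (X : Multiset BTree) :
    steals (triv ::ₘ X) ≤ steals (T ::ₘ X) := by
  induction hk : steals (triv ::ₘ X) using Nat.strong_induction_on generalizing X with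
  | _ k ih =>
  rcases Nat.eq_zero_or_pos k with rfl | hpos
  · exact Nat.zero_le _
  obtain ⟨Y, ⟨U, l, r, S₀, hX, rfl⟩, hsteals⟩ := exists_stealStep_steals_eq (hk ▸ hpos)
  rcases cons_eq_cons.1 hX with ⟨rfl, rfl⟩ | ⟨hU, cs, rfl, hcs⟩
  · -- the idle processor was the thief: `T` can steal in its place
    have := (show StealStep (T ::ₘ node l r ::ₘ S₀) (l ::ₘ r ::ₘ S₀) from
      ⟨T, l, r, S₀, rfl, rfl⟩).steals_lt
    omega
  · -- the idle processor survives the step: induct, then let the same thief act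
    obtain ⟨_, S₁, rfl, rfl⟩ := (cons_eq_cons.1 hcs).resolve_left (fun h => nomatch h.1)
    have hY : l ::ₘ r ::ₘ triv ::ₘ S₁ = triv ::ₘ l ::ₘ r ::ₘ S₁ := by
      simp only [cons_swap]
    have hstep : StealStep (T ::ₘ U ::ₘ node l r ::ₘ S₁) (T ::ₘ l ::ₘ r ::ₘ S₁) :=
      ⟨U, l, r, T ::ₘ S₁, by simp only [cons_swap], by simp only [cons_swap]⟩
    have := ih (steals (l ::ₘ r ::ₘ triv ::ₘ S₁)) (by omega) (l ::ₘ r ::ₘ S₁) (by rw [hY])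
    have := hstep.steals_lt
    omega

theorem steals_replicate_triv_add_le (S X : Multiset BTree) :
    steals (replicate (card S) triv + X) ≤ steals (S + X) := by
  induction S using Multiset.induction generalizing X with
  | empty => simp
  | cons a S ih =>
    calc steals (replicate (card (a ::ₘ S)) triv + X)
        = steals (replicate (card S) triv + triv ::ₘ X) := by
          rw [card_cons, replicate_succ, cons_add, add_cons]
      _ ≤ steals (S + triv ::ₘ X) := ih _
      _ = steals (triv ::ₘ (S + X)) := by rw [add_cons]
      _ ≤ steals (a ::ₘ S + X) := by rw [cons_add]; exact steals_cons_triv_le a _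

/-- Run `S` to completion first; the processors it leaves idle then join `X`. -/
theorem steals_add_steals_replicate_le (S X : Multiset BTree) :
    steals S + steals (replicate (card S) triv + X) ≤ steals (S + X) := by
  induction hk : steals S using Nat.strong_induction_on generalizing S with
  | _ k ih =>
  rcases Nat.eq_zero_or_pos k with rfl | hpos
  · simpa using steals_replicate_triv_add_le S X
  obtain ⟨S', hstep, hsteals⟩ := exists_stealStep_steals_eq (hk ▸ hpos)
  have := ih (steals S') (by omega) S' rfl
  have := (hstep.add_right X).steals_lt
  rw [hstep.card_eq] at *
  omega

theorem steals_le_steals_add (S X : Multiset BTree) : steals S ≤ steals (S + X) :=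
  (Nat.le_add_right _ _).trans (steals_add_steals_replicate_le S X)

theorem Phi_le_Phi_succ (T : BTree) (m : ℕ) : Phi T m ≤ Phi T (m + 1) := by
  have := steals_le_steals_add (T ::ₘ replicate m triv) {triv}
  rwa [add_comm, singleton_add, cons_swap] at this

theorem stealStep_node_cons_replicate_triv {l r : BTree} {m : ℕ} {Y : Multiset BTree}
    (h : StealStep (node l r ::ₘ replicate (m + 1) triv) Y) :
    Y = l ::ₘ r ::ₘ replicate m triv := by
  obtain ⟨U, l', r', S₀, hS, rfl⟩ := h
  have not_mem {T} (hT : node l' r' ∈ replicate T triv) : False := nomatch eq_of_mem_replicate hT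
  rcases cons_eq_cons.1 hS with ⟨rfl, hR⟩ | ⟨-, cs, hR, hN⟩
  · exact (not_mem (hR ▸ mem_cons_self _ _)).elim
  · obtain rfl : U = triv := eq_of_mem_replicate (hR ▸ mem_cons_self _ _)
    rw [replicate_succ, cons_inj_right] at hR
    rcases cons_eq_cons.1 (hR ▸ hN) with ⟨h, rfl⟩ | ⟨-, cs', -, hcs⟩
    · cases h; rfl
    · exact (not_mem (hcs ▸ mem_cons_self _ _)).elim

theorem Phi_node_succ (l r : BTree) (m : ℕ) :
    Phi (node l r) (m + 1) = steals (l ::ₘ r ::ₘ replicate m triv) + 1 := by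
  have hstep : StealStep (node l r ::ₘ replicate (m + 1) triv) (l ::ₘ r ::ₘ replicate m triv) :=
    ⟨triv, l, r, replicate m triv, by rw [replicate_succ, cons_swap], rfl⟩
  refine le_antisymm ?_ hstep.steals_lt
  rcases Nat.eq_zero_or_pos (Phi (node l r) (m + 1)) with h | hpos
  · omega
  obtain ⟨Y, hY, hsteals⟩ := exists_stealStep_steals_eq hpos
  rw [Phi, hsteals, stealStep_node_cons_replicate_triv hY]

/-- The steals gained by running the trees of `p` one after the other, each with the help of
the `m` idle processors and of all processors freed by the trees before it. -/
noncomputable def seqPhi : List BTree → ℕ → ℕ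
  | [], _ => 0
  | T :: p, m => Phi T m + seqPhi p (m + 1)

theorem seqPhi_le_steals (p : List BTree) (m : ℕ) :
    seqPhi p m ≤ steals (p + replicate m triv) := by
  induction p generalizing m with
  | nil => exact Nat.zero_le _
  | cons T p ih =>
    have := steals_add_steals_replicate_le (T ::ₘ replicate m triv) p
    rw [card_cons, card_replicate, add_comm (replicate _ _), cons_add] at this
    rw [seqPhi, ← cons_coe, cons_add, add_comm (p : Multiset BTree)]
    have := ih (m + 1)
    rw [Phi]
    omega

theorem seqPhi_lt_Phi_node_succ {l r : BTree} {p : List BTree}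
    (hp : (p : Multiset BTree) = {l, r}) (m : ℕ) : seqPhi p m < Phi (node l r) (m + 1) := by
  rw [Phi_node_succ, Nat.lt_add_one_iff]
  simpa [hp] using seqPhi_le_steals p m

noncomputable def maxSeqPhi (S : Multiset BTree) (m : ℕ) : ℕ :=
  S.lists.toFinset.sup (seqPhi · m)

theorem seqPhi_le_maxSeqPhi {p : List BTree} {S : Multiset BTree} (hp : (p : Multiset BTree) = S)
    (m : ℕ) : seqPhi p m ≤ maxSeqPhi S m :=
  Finset.le_sup (f := (seqPhi · m)) (by simp [hp])

theorem maxSeqPhi_le {S : Multiset BTree} {m k : ℕ}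
    (h : ∀ p : List BTree, (p : Multiset BTree) = S → seqPhi p m ≤ k) : maxSeqPhi S m ≤ k :=
  Finset.sup_le fun p hp => h p (by simpa [eq_comm] using hp)

theorem exists_seqPhi_eq_maxSeqPhi (S : Multiset BTree) (m : ℕ) :
    ∃ p : List BTree, (p : Multiset BTree) = S ∧ seqPhi p m = maxSeqPhi S m := by
  obtain ⟨p, hp, heq⟩ := Finset.exists_mem_eq_sup S.lists.toFinset
    ⟨S.toList, by simp⟩ (seqPhi · m)
  exact ⟨p, by simpa [eq_comm] using hp, heq.symm⟩

theorem Phi_add_maxSeqPhi_le (T : BTree) (S : Multiset BTree) (m : ℕ) :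
    Phi T m + maxSeqPhi S (m + 1) ≤ maxSeqPhi (T ::ₘ S) m := by
  obtain ⟨p, rfl, hp⟩ := exists_seqPhi_eq_maxSeqPhi S (m + 1)
  rw [← hp]
  exact seqPhi_le_maxSeqPhi (p := T :: p) rfl m

theorem maxSeqPhi_le_steals (S : Multiset BTree) (m : ℕ) :
    maxSeqPhi S m ≤ steals (S + replicate m triv) :=
  maxSeqPhi_le fun p hp => hp ▸ seqPhi_le_steals p m

theorem maxSeqPhi_pair (A B : BTree) (m : ℕ) :
    maxSeqPhi {A, B} m = max (Phi A m + Phi B (m + 1)) (Phi B m + Phi A (m + 1)) := by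
  apply le_antisymm
  · refine maxSeqPhi_le fun p hp => ?_
    have hperm := coe_eq_coe.1 (hp.trans (rfl : ({A, B} : Multiset BTree) = [A, B]))
    rcases List.perm_pair.1 hperm with rfl | rfl <;> simp [seqPhi]
  · apply max_le
    · simpa [seqPhi] using seqPhi_le_maxSeqPhi (p := [A, B]) (S := {A, B}) rfl m
    · simpa [seqPhi] using seqPhi_le_maxSeqPhi (p := [B, A]) (S := {A, B}) (pair_comm B A) m

/-- Exchange argument: the trees of `S` scheduled before `l` or `r` can be moved in front of
them (by monotonicity of `Phi` in the number of idle processors), and once `l` and `r` are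
adjacent they merge into `node l r`, which gains the steal at its root. -/
theorem seqPhi_lt_maxSeqPhi_node {l r : BTree} {p : List BTree} {S : Multiset BTree}
    (hp : (p : Multiset BTree) = l ::ₘ r ::ₘ S) (m : ℕ) :
    seqPhi p m < maxSeqPhi (node l r ::ₘ S) (m + 1) := by
  induction hn : p.length using Nat.strong_induction_on generalizing p S m with
  | _ n ih =>
  subst hn
  obtain _ | ⟨a, q⟩ := p
  · simp at hp
  rw [← cons_coe] at hp
  by_cases ha : a ∈ S
  · obtain ⟨S', rfl⟩ := exists_cons_of_mem ha
    have hq : (q : Multiset BTree) = l ::ₘ r ::ₘ S' := by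
      rwa [cons_swap r, cons_swap l, cons_inj_right] at hp
    have := ih _ (by simp) hq (m + 1) rfl
    have := Phi_add_maxSeqPhi_le a (node l r ::ₘ S') (m + 1)
    have := Phi_le_Phi_succ a m
    rw [seqPhi, cons_swap]
    omega
  obtain ⟨b, hpair⟩ : ∃ b, ({a, b} : Multiset BTree) = {l, r} := by
    rcases mem_cons.1 (hp ▸ mem_cons_self a q) with rfl | ha'
    · exact ⟨r, rfl⟩
    · obtain rfl := (mem_cons.1 ha').resolve_right ha
      exact ⟨l, pair_comm _ _⟩
  have hab (S : Multiset BTree) : l ::ₘ r ::ₘ S = a ::ₘ b ::ₘ S := by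
    simpa [insert_eq_cons] using congrArg (· + S) hpair.symm
  obtain _ | ⟨c, q'⟩ := q
  · simp [hab] at hp
  rw [hab, ← cons_coe, cons_inj_right] at hp
  by_cases hc : c ∈ S
  · obtain ⟨S', rfl⟩ := exists_cons_of_mem hc
    have hq' : ((a :: q' : List BTree) : Multiset BTree) = l ::ₘ r ::ₘ S' := by
      rw [hab, ← cons_coe, ← (cons_inj_right c).1 (hp.trans (cons_swap _ _ _))]
    have := ih _ (by simp) hq' (m + 1) rfl
    have := Phi_add_maxSeqPhi_le c (node l r ::ₘ S') (m + 1)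
    have := Phi_le_Phi_succ a m
    simp only [seqPhi] at *
    rw [cons_swap]
    omega
  obtain ⟨rfl, hq'⟩ : c = b ∧ (q' : Multiset BTree) = S := by
    rcases cons_eq_cons.1 hp with h | ⟨-, cs, -, rfl⟩
    · exact h
    · exact absurd (mem_cons_self c cs) hc
  have := seqPhi_lt_Phi_node_succ (p := [a, c]) hpair m
  have := seqPhi_le_maxSeqPhi (p := node l r :: q') (S := node l r ::ₘ S) (by rw [← hq']; rfl)
    (m + 1)
  simp only [seqPhi] at *
  omega

theorem maxSeqPhi_lt_maxSeqPhi_node (l r : BTree) (S : Multiset BTree) (m : ℕ) :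
    maxSeqPhi (l ::ₘ r ::ₘ S) m < maxSeqPhi (node l r ::ₘ S) (m + 1) := by
  obtain ⟨p, hp, heq⟩ := exists_seqPhi_eq_maxSeqPhi (l ::ₘ r ::ₘ S) m
  exact heq ▸ seqPhi_lt_maxSeqPhi_node hp m

theorem steals_le_maxSeqPhi (S : Multiset BTree) (m : ℕ) :
    steals (S + replicate m triv) ≤ maxSeqPhi S m := by
  induction hk : steals (S + replicate m triv) using Nat.strong_induction_on
    generalizing S m with
  | _ k ih =>
  rcases Nat.eq_zero_or_pos k with rfl | hpos
  · exact Nat.zero_le _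
  obtain ⟨Y, ⟨U, l, r, S₀, hX, rfl⟩, hsteals⟩ := exists_stealStep_steals_eq (hk ▸ hpos)
  have hnode : node l r ∈ S := by
    rcases mem_add.1 (hX ▸ mem_cons_of_mem (mem_cons_self _ _)) with h | h
    · exact h
    · exact nomatch eq_of_mem_replicate h
  obtain ⟨S₁, rfl⟩ := exists_cons_of_mem hnode
  have hUS₀ : U ::ₘ S₀ = S₁ + replicate m triv := by
    rwa [cons_add, cons_swap U, cons_inj_right, eq_comm] at hX
  rcases mem_add.1 (hUS₀ ▸ mem_cons_self U S₀) with hU | hU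
  · -- the thief is the owner of a tree `U` of `S`, which it abandons
    obtain ⟨S₂, rfl⟩ := exists_cons_of_mem hU
    rw [cons_add, cons_inj_right] at hUS₀
    rw [hUS₀, ← cons_add, ← cons_add] at hsteals
    have := ih _ (by omega) (l ::ₘ r ::ₘ S₂) m rfl
    have := maxSeqPhi_lt_maxSeqPhi_node l r S₂ m
    have := Phi_add_maxSeqPhi_le U (node l r ::ₘ S₂) m
    rw [cons_swap] at this
    omega
  · obtain rfl := eq_of_mem_replicate hU
    obtain ⟨m, rfl⟩ : ∃ m', m = m' + 1 :=
      Nat.exists_eq_add_one_of_ne_zero (by rintro rfl; simp at hU)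
    rw [replicate_succ, add_cons, cons_inj_right] at hUS₀
    rw [hUS₀, ← cons_add, ← cons_add] at hsteals
    have := ih _ (by omega) (l ::ₘ r ::ₘ S₁) m rfl
    have := maxSeqPhi_lt_maxSeqPhi_node l r S₁ m
    omega

theorem steals_add_replicate_triv (S : Multiset BTree) (m : ℕ) :
    steals (S + replicate m triv) = maxSeqPhi S m :=
  (steals_le_maxSeqPhi S m).antisymm (maxSeqPhi_le_steals S m)

theorem potential_recurrence (Tl Tr : BTree) (n : ℕ) (hn : 1 ≤ n) :
    Phi (BTree.node Tl Tr) n =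
      1 + max (Phi Tl (n - 1) + Phi Tr n) (Phi Tr (n - 1) + Phi Tl n) := by
  obtain ⟨m, rfl⟩ := Nat.exists_eq_add_of_le' hn
  have hpair : Tl ::ₘ Tr ::ₘ replicate m triv = {Tl, Tr} + replicate m triv := by
    simp [insert_eq_cons]
  rw [Phi_node_succ, hpair, steals_add_replicate_triv, maxSeqPhi_pair, Nat.add_sub_cancel,
    add_comm]
end

section
/- For all integers h ≥ 0 and n ≥ 0, Φ(CBT(h), n) = ∑_{i=1}^{n} C(h, i), where C(h, i) denotes the binomial coefficient (equal to 0 when i > h). -/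
/-- The complete binary tree of height `h`. -/
def CBT : ℕ → BTree
  | 0 => BTree.triv
  | h + 1 => BTree.node (CBT h) (CBT h)

def potCBT (h n : ℕ) : ℕ := ∑ i ∈ Finset.Icc 1 n, Nat.choose h i

lemma potCBT_zero_left (n : ℕ) : potCBT 0 n = 0 :=
  Finset.sum_eq_zero fun _ hi => Nat.choose_eq_zero_of_lt (Finset.mem_Icc.1 hi).1

lemma potCBT_zero_right (h : ℕ) : potCBT h 0 = 0 := rfl

lemma potCBT_succ_right (h n : ℕ) : potCBT h (n + 1) = potCBT h n + h.choose (n + 1) :=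
  Finset.sum_Icc_succ_top (by omega) _

lemma potCBT_mono_right (h : ℕ) {n n' : ℕ} (hn : n ≤ n') : potCBT h n ≤ potCBT h n' :=
  Finset.sum_le_sum_of_subset (Finset.Icc_subset_Icc_right hn)

lemma potCBT_succ_succ (h n : ℕ) :
    potCBT (h + 1) (n + 1) = potCBT h (n + 1) + potCBT h n + 1 := by
  induction n with
  | zero => simp [potCBT]
  | succ n ih =>
    rw [potCBT_succ_right, ih, potCBT_succ_right h (n + 1), potCBT_succ_right h n,
      Nat.choose_succ_succ']
    ring

lemma potCBT_add_potCBT_lt_potCBT_succ (b : ℕ) {p q : ℕ} (hpq : p < q) :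
    potCBT b p + potCBT b q < potCBT (b + 1) q := by
  obtain ⟨q, rfl⟩ : ∃ q', q = q' + 1 := Nat.exists_eq_succ_of_ne_zero (by omega)
  have := potCBT_mono_right b (Nat.lt_succ_iff.1 hpq)
  rw [potCBT_succ_succ]
  omega

def listPot : ℕ → List ℕ → ℕ
  | _, [] => 0
  | i, x :: xs => potCBT x i + listPot (i + 1) xs

lemma listPot_append_cons (i x : ℕ) (A B : List ℕ) :
    listPot i (A ++ x :: B) = listPot i A + potCBT x (i + A.length) +
      listPot (i + A.length + 1) B := by
  induction A generalizing i with
  | nil => simp [listPot]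
  | cons y A ih =>
    simp only [List.cons_append, listPot, ih, List.length_cons]
    rw [show i + 1 + A.length = i + (A.length + 1) by omega]
    ring

lemma listPot_le_sum_map {i j : ℕ} {L : List ℕ} (hL : i + L.length ≤ j + 1) :
    listPot i L ≤ (L.map (potCBT · j)).sum := by
  induction L generalizing i with
  | nil => simp [listPot]
  | cons x L ih =>
    simp only [List.length_cons] at hL
    simp only [listPot, List.map_cons, List.sum_cons]
    exact add_le_add (potCBT_mono_right x (by omega)) (ih (by omega))

lemma listPot_le_potCBT {h n : ℕ} {L : List ℕ}
    (hL : (L : Multiset ℕ) = h ::ₘ Multiset.replicate n 0) : listPot 0 L ≤ potCBT h n := by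
  have hlen : L.length = n + 1 := by simpa using congrArg Multiset.card hL
  calc listPot 0 L ≤ (L.map (potCBT · n)).sum := listPot_le_sum_map (by omega)
    _ = ((h ::ₘ Multiset.replicate n 0).map (potCBT · n)).sum := by
        rw [← hL, Multiset.map_coe, Multiset.sum_coe]
    _ = potCBT h n := by simp [potCBT_zero_left]

lemma coe_append_cons {α : Type*} (A B : List α) (x : α) :
    ((A ++ x :: B : List α) : Multiset α) = x ::ₘ ↑(A ++ B) :=
  Multiset.coe_eq_coe.2 List.perm_middle

lemma exists_eq_append_cons_append_cons {α : Type*} {L : List α} {b : α} {M : Multiset α}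
    (hL : (L : Multiset α) = b ::ₘ b ::ₘ M) :
    ∃ A B C : List α, L = A ++ b :: (B ++ b :: C) ∧ ((A ++ B ++ C : List α) : Multiset α) = M := by
  obtain ⟨A, R, rfl, hbA⟩ := List.eq_append_cons_of_mem
    (Multiset.mem_coe.1 (hL ▸ Multiset.mem_cons_self b _))
  rw [coe_append_cons, Multiset.cons_inj_right] at hL
  have hbR : b ∈ R := by
    have : b ∈ ((A ++ R : List α) : Multiset α) := hL ▸ Multiset.mem_cons_self b M
    simpa [hbA] using this
  obtain ⟨B, C, rfl⟩ := List.append_of_mem hbR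
  refine ⟨A, B, C, rfl, ?_⟩
  rwa [← List.append_assoc, coe_append_cons, Multiset.cons_inj_right] at hL

lemma exists_listPot_lt_of_coe_eq {L' : List ℕ} {b : ℕ} {M : Multiset ℕ}
    (hL' : (L' : Multiset ℕ) = b ::ₘ b ::ₘ M) (a : ℕ) :
    ∃ L : List ℕ, (L : Multiset ℕ) = a ::ₘ (b + 1) ::ₘ M ∧ listPot 0 L' < listPot 0 L := by
  obtain ⟨A, B, C, rfl, hM⟩ := exists_eq_append_cons_append_cons hL'
  refine ⟨A ++ a :: (B ++ (b + 1) :: C), ?_, ?_⟩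
  · rw [coe_append_cons, ← List.append_assoc, coe_append_cons, hM]
  · simp only [listPot_append_cons, zero_add]
    have := potCBT_add_potCBT_lt_potCBT_succ b (p := A.length) (q := A.length + 1 + B.length)
      (by omega)
    omega

lemma CBT_eq_node {c : ℕ} {l r : BTree} (hc : CBT c = .node l r) :
    ∃ b, c = b + 1 ∧ l = CBT b ∧ r = CBT b := by
  cases c with
  | zero => cases hc
  | succ b =>
    obtain ⟨rfl, rfl⟩ := BTree.node.inj hc
    exact ⟨b, rfl, rfl, rfl⟩

lemma StealStep.exists_of_map_CBT {H : Multiset ℕ} {S : Multiset BTree}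
    (hS : StealStep (H.map CBT) S) :
    ∃ a b M, H = a ::ₘ (b + 1) ::ₘ M ∧ S = (b ::ₘ b ::ₘ M).map CBT := by
  obtain ⟨U, l, r, S₀, hH, rfl⟩ := hS
  obtain ⟨a, ha, -, hHa⟩ := (Multiset.map_eq_cons CBT H _ U).2 hH
  obtain ⟨c, hc, hcnode, hS₀⟩ := (Multiset.map_eq_cons CBT (H.erase a) _ _).2 hHa
  obtain ⟨b, rfl, rfl, rfl⟩ := CBT_eq_node hcnode
  refine ⟨a, b, (H.erase a).erase (b + 1), ?_, by simp [hS₀]⟩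
  rw [Multiset.cons_erase hc, Multiset.cons_erase ha]

lemma StealSeq.exists_le_listPot {m : ℕ} {H : Multiset ℕ} (hm : StealSeq m (H.map CBT)) :
    ∃ L : List ℕ, (L : Multiset ℕ) = H ∧ m ≤ listPot 0 L := by
  induction m generalizing H with
  | zero => exact ⟨H.toList, H.coe_toList, Nat.zero_le _⟩
  | succ m ih =>
    obtain ⟨S, hstep, hseq⟩ := hm
    obtain ⟨a, b, M, rfl, rfl⟩ := hstep.exists_of_map_CBT
    obtain ⟨L', hL', hmL'⟩ := ih hseq
    obtain ⟨L, hL, hlt⟩ := exists_listPot_lt_of_coe_eq hL' a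
    exact ⟨L, hL, by omega⟩

/-- The continuation `hk` records that the schedule touches only the `n + 1` processors holding
`CBT h` and `W`, and may leave them holding anything. -/
lemma stealSeq_potCBT_add (h : ℕ) {n k : ℕ} {Y W : Multiset BTree} (hW : Multiset.card W = n)
    (hk : ∀ E : Multiset BTree, Multiset.card E = n + 1 → StealSeq k (Y + E)) :
    StealSeq (potCBT h n + k) (Y + CBT h ::ₘ W) := by
  induction h generalizing n k Y W with
  | zero => simpa [potCBT_zero_left] using hk (CBT 0 ::ₘ W) (by simp [hW])
  | succ h ih =>
    cases n with
    | zero => simpa [potCBT_zero_right] using hk (CBT (h + 1) ::ₘ W) (by simp [hW])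
    | succ n =>
      obtain ⟨w, W', rfl, hW'⟩ := Multiset.card_eq_succ_iff.1 hW
      have rest : StealSeq (potCBT h n + (potCBT h (n + 1) + k)) ((CBT h ::ₘ Y) + CBT h ::ₘ W') :=
        ih hW' fun E hE => by
          simpa only [Multiset.cons_add, ← Multiset.add_cons] using ih hE hk
      rw [potCBT_succ_succ, show potCBT h (n + 1) + potCBT h n + 1 + k =
        potCBT h n + (potCBT h (n + 1) + k) + 1 by ring]
      refine ⟨_, ⟨w, CBT h, CBT h, Y + W', ?_, ?_⟩, rest⟩
      · simp only [Multiset.add_cons, Multiset.cons_swap w, CBT]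
      · simp only [Multiset.cons_add, Multiset.add_cons]

theorem potential_CBT (h n : ℕ) :
    Phi (CBT h) n = ∑ i ∈ Finset.Icc 1 n, Nat.choose h i := by
  refine IsGreatest.csSup_eq ⟨?_, fun m hm => ?_⟩
  · simpa [potCBT] using stealSeq_potCBT_add h (Y := 0) (k := 0) (Multiset.card_replicate n _)
      fun _ _ => trivial
  · have hS : CBT h ::ₘ Multiset.replicate n BTree.triv =
        (h ::ₘ Multiset.replicate n 0).map CBT := by simp [CBT]
    rw [hS] at hm
    obtain ⟨L, hL, hmL⟩ := hm.exists_le_listPot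
    exact hmL.trans (listPot_le_potCBT hL)
end

section
/- For all integers k ≥ 2, j ≥ 1, b ≥ 1, and 1 ≤ b' ≤ k−1, if h > h' ≥ 0 then g(b', h', j) ≤ g(b, h, j). -/
/-- For fixed `k`, `g k b h j = (k−1)^j · C(h, j) + (b−1) · (k−1)^{j−1} · C(h, j−1)`. -/
def g (k b h j : ℕ) : ℕ :=
  (k - 1) ^ j * Nat.choose h j + (b - 1) * ((k - 1) ^ (j - 1) * Nat.choose h (j - 1))

theorem g_succ (k b h j : ℕ) :
    g k b h (j + 1) =
      (k - 1) ^ (j + 1) * h.choose (j + 1) + (b - 1) * ((k - 1) ^ j * h.choose j) :=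
  rfl

theorem pow_mul_choose_le_g (k b h j : ℕ) : (k - 1) ^ j * h.choose j ≤ g k b h j :=
  Nat.le_add_right _ _

/-- Raising the coefficient `b - 1` of the second term to `k - 1` lets Pascal's rule absorb it. -/
theorem g_succ_le_pow_mul_choose_succ {k b : ℕ} (hb : b ≤ k) (h j : ℕ) :
    g k b h (j + 1) ≤ (k - 1) ^ (j + 1) * (h + 1).choose (j + 1) := by
  have hcoeff : (b - 1) * (k - 1) ^ j ≤ (k - 1) ^ (j + 1) := by
    rw [pow_succ']
    gcongr
  calc g k b h (j + 1)
      = (k - 1) ^ (j + 1) * h.choose (j + 1) + (b - 1) * (k - 1) ^ j * h.choose j := by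
        rw [g_succ, mul_assoc]
    _ ≤ (k - 1) ^ (j + 1) * h.choose (j + 1) + (k - 1) ^ (j + 1) * h.choose j := by
        gcongr
    _ = (k - 1) ^ (j + 1) * (h + 1).choose (j + 1) := by
        rw [Nat.choose_succ_succ', mul_add, add_comm]

theorem g_mono_general (k j b b' h h' : ℕ) (hj : 1 ≤ j)
    (hb' : b' ≤ k - 1) (hh : h' < h) :
    g k b' h' j ≤ g k b h j := by
  obtain ⟨j, rfl⟩ := Nat.exists_eq_add_of_le' hj
  calc g k b' h' (j + 1)
      ≤ (k - 1) ^ (j + 1) * (h' + 1).choose (j + 1) :=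
        g_succ_le_pow_mul_choose_succ (by omega) h' j
    _ ≤ (k - 1) ^ (j + 1) * h.choose (j + 1) := by
        gcongr
        exact hh
    _ ≤ g k b h (j + 1) := pow_mul_choose_le_g k b h (j + 1)

theorem g_mono (k j b b' h h' : ℕ) (hk : 2 ≤ k) (hj : 1 ≤ j) (hb : 1 ≤ b) (hb'1 : 1 ≤ b')
    (hb' : b' ≤ k - 1) (hh : h' < h) :
    g k b' h' j ≤ g k b h j :=
  g_mono_general k j b b' h h' hj hb' hh
end

section
/- Let k ≥ 2, P ≥ 1, and for 1 ≤ i ≤ P let h_i ≥ 0 and 1 ≤ b_i ≤ k−1 with sizes sorted increasingly: b_1·k^{h_1} ≤ b_2·k^{h_2} ≤ ⋯ ≤ b_P·k^{h_P}. Then for every permutation σ of {1, …, P}, ∑_{i=1}^{P} f(b_{σ(i)}, h_{σ(i)}, i−1) ≤ ∑_{i=1}^{P} f(b_i, h_i, i−1); that is, the maximum over permutations of the total potential is attained by assigning the trees in increasing order of size. -/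
/-!
`f k b h n` is the partial sum `∑_{j<n} fStep k b h j`, and each increment `fStep k · · j` is
monotone in the size `b·k^h`: a larger size has either the same height and a larger `b`, or a
larger height, in which case Pascal's rule absorbs any `b ≤ k - 1`. Exchanging the two sums, the
total potential is `∑_j ∑_i [j < i] · fStep k (b (σ i)) (h (σ i)) j`, and for each `j` the
rearrangement inequality says that pairing the monotone indicator `i ↦ [j < i]` with the sorted
increments is optimal.
-/

/-- For fixed `k`, `f k b h n = ∑_{i=1}^{n} (k−1)^i · C(h, i) + (b−1) · ∑_{i=0}^{n−1} (k−1)^i · C(h, i)`. -/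
def f (k b h n : ℕ) : ℕ :=
  (∑ i ∈ Finset.Icc 1 n, (k - 1) ^ i * Nat.choose h i) +
    (b - 1) * ∑ i ∈ Finset.range n, (k - 1) ^ i * Nat.choose h i

open Finset Equiv

theorem sum_sum_range_comp_perm_le {β : Type*} [AddCommMonoid β] [LinearOrder β]
    [IsOrderedCancelAddMonoid β] {n : ℕ} (D : Fin n → ℕ → β) (hD : ∀ j, Monotone (D · j))
    (σ : Perm (Fin n)) :
    ∑ i : Fin n, ∑ j ∈ range i, D (σ i) j ≤ ∑ i : Fin n, ∑ j ∈ range i, D i j := by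
  have sum_range_eq (i x : Fin n) :
      ∑ j ∈ range i, D x j = ∑ j ∈ range n, (if j < i then 1 else 0 : ℕ) • D x j := by
    simp only [ite_smul, one_smul, zero_smul, ← sum_filter]
    congr 1
    ext j
    simp only [mem_range, mem_filter]
    omega
  simp only [sum_range_eq]
  rw [sum_comm, sum_comm (s := univ)]
  refine sum_le_sum fun j _ => ?_
  have hmono : Monotone fun i : Fin n => if j < i then 1 else 0 := by
    intro a b hab
    dsimp only
    split_ifs <;> omega
  exact (hmono.monovary (hD j)).sum_smul_comp_perm_le_sum_smul

def fStep (k b h j : ℕ) : ℕ :=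
  (k - 1) ^ (j + 1) * h.choose (j + 1) + (b - 1) * ((k - 1) ^ j * h.choose j)

theorem f_eq_sum_fStep (k b h n : ℕ) : f k b h n = ∑ j ∈ range n, fStep k b h j := by
  induction n with
  | zero => simp [f]
  | succ n ih =>
    rw [sum_range_succ, ← ih, f, f, sum_Icc_succ_top (by omega), sum_range_succ, fStep]
    ring

theorem Nat.le_of_mul_pow_le_mul_pow {k b b' h h' : ℕ} (hb : 1 ≤ b) (hb' : b' < k)
    (hle : b * k ^ h ≤ b' * k ^ h') : h ≤ h' := by
  by_contra! hlt
  have hk : 0 < k := by omega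
  have : k ^ h < k ^ h := calc
    k ^ h ≤ b * k ^ h := Nat.le_mul_of_pos_left _ hb
    _ ≤ b' * k ^ h' := hle
    _ < k * k ^ h' := Nat.mul_lt_mul_of_pos_right hb' (by positivity)
    _ = k ^ (h' + 1) := (Nat.pow_succ' ..).symm
    _ ≤ k ^ h := Nat.pow_le_pow_right hk hlt
  exact lt_irrefl _ this

theorem fStep_mono {k b b' h h' : ℕ} (hb : 1 ≤ b) (hbk : b ≤ k - 1) (hbk' : b' ≤ k - 1)
    (hle : b * k ^ h ≤ b' * k ^ h') (j : ℕ) : fStep k b h j ≤ fStep k b' h' j := by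
  obtain rfl | hlt := (Nat.le_of_mul_pow_le_mul_pow hb (by omega) hle).eq_or_lt
  · have : b ≤ b' := Nat.le_of_mul_le_mul_right hle (Nat.pow_pos (by omega))
    unfold fStep
    gcongr
  · -- the largest `b` at height `h` still falls short of height `h + 1` by Pascal's rule
    calc fStep k b h j
        ≤ (k - 1) ^ (j + 1) * h.choose (j + 1) + (k - 1) * ((k - 1) ^ j * h.choose j) := by
          unfold fStep; gcongr; omega
      _ = (k - 1) ^ (j + 1) * (h + 1).choose (j + 1) := by
          rw [Nat.choose_succ_succ]; ring
      _ ≤ (k - 1) ^ (j + 1) * h'.choose (j + 1) := by gcongr; exact hlt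
      _ ≤ fStep k b' h' j := Nat.le_add_right _ _

theorem sorted_assignment_maximal_general (k P : ℕ)
    (h b : Fin P → ℕ) (hb1 : ∀ i, 1 ≤ b i) (hbk : ∀ i, b i ≤ k - 1)
    (hsorted : ∀ i j : Fin P, i ≤ j → b i * k ^ h i ≤ b j * k ^ h j)
    (σ : Equiv.Perm (Fin P)) :
    ∑ i : Fin P, f k (b (σ i)) (h (σ i)) i.val ≤ ∑ i : Fin P, f k (b i) (h i) i.val := by
  simp only [f_eq_sum_fStep]
  exact sum_sum_range_comp_perm_le (fun i j => fStep k (b i) (h i) j)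
    (fun j _ _ hij => fStep_mono (hb1 _) (hbk _) (hbk _) (hsorted _ _ hij) j) σ

theorem sorted_assignment_maximal (k P : ℕ) (hk : 2 ≤ k) (hP : 1 ≤ P)
    (h b : Fin P → ℕ) (hb1 : ∀ i, 1 ≤ b i) (hbk : ∀ i, b i ≤ k - 1)
    (hsorted : ∀ i j : Fin P, i ≤ j → b i * k ^ h i ≤ b j * k ^ h j)
    (σ : Equiv.Perm (Fin P)) :
    ∑ i : Fin P, f k (b (σ i)) (h (σ i)) i.val ≤ ∑ i : Fin P, f k (b i) (h i) i.val :=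
  sorted_assignment_maximal_general k P h b hb1 hbk hsorted σ
end
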